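/- arXiv:2303.11996 — 7 statements merged into one kernel-verified Lean document; each statement's English description precedes it below -/
import Mathlib

section
/- For every integer t ≥ 1, the graph G_t admits an automorphism that fixes both leaves v_1 and v_2 and interchanges the vertices u_1 and u_2. -/
open SimpleGraph Finset

/-- A `Fintype` instance for the vertex set of a vertex-deleted subgraph. -/
noncomputable instance instFintypeNe {V : Type*} [Fintype V] (v : V) :
    Fintype {u : V // u ≠ v} :=
  (Set.toFinite {u : V | u ≠ v}).fintype

/-- The graph obtained from `G` by deleting the vertex `v` (an induced subgraph). -/
def deleteVertex {V : Type*} (G : SimpleGraph V) (v : V) :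
    SimpleGraph {u : V // u ≠ v} :=
  G.induce {u : V | u ≠ v}

/-- The Wiener index of a finite simple graph: the sum of distances over all
unordered pairs of vertices. -/
noncomputable def wiener {V : Type*} [Fintype V] (G : SimpleGraph V) : ℕ :=
  (∑ u : V, ∑ v : V, G.dist u v) / 2

/-- `v` is a Šoltés vertex of `G` if `G - v` is connected and has the same Wiener index. -/
def IsSoltes {V : Type*} [Fintype V] (G : SimpleGraph V) (v : V) : Prop :=
  (deleteVertex G v).Connected ∧ wiener (deleteVertex G v) = wiener G

/-- A graph is cubic (3-regular) if every vertex has exactly 3 neighbours. -/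
def IsCubic {V : Type*} (G : SimpleGraph V) : Prop :=
  ∀ v : V, (G.neighborSet v).ncard = 3

/-- A finite graph is 2-connected if it is connected, has at least 3 vertices,
and stays connected after deleting any one vertex. -/
def TwoConnected {V : Type*} [Fintype V] (G : SimpleGraph V) : Prop :=
  G.Connected ∧ 3 ≤ Fintype.card V ∧ ∀ v : V, (deleteVertex G v).Connected

/-! ### The graph `G_t`

`G_t` has `8t + 8` vertices: `2t` diamonds (copies of `K₄ − e`) arranged in a ring,
where each diamond `j` has vertices `A_j, B_j, C_j, D_j` (encoded as
`Sum.inl (j, 0), …, Sum.inl (j, 3)`), `A_j, B_j` being its two degree-2 vertices;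
consecutive diamonds are joined by the edges `B_j A_{j+1}`, and the remaining
connecting edge (between diamond `2t-1` and diamond `0`) is subdivided by the two
adjacent vertices `z₁, z₂` (encoded `Sum.inr 0, Sum.inr 1`); there is a 4-cycle
`c₁ c₁ₐ c₂ c₂ₐ` (encoded `Sum.inr 2, Sum.inr 4, Sum.inr 3, Sum.inr 5`) whose opposite
vertices `c₁, c₂` are joined to `z₁, z₂` respectively, and pendant leaves
`v₁, v₂` (encoded `Sum.inr 6, Sum.inr 7`) are attached to `c₁ₐ, c₂ₐ`. -/

/-- The vertex type of the graph `G_t`. -/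
abbrev GtV (t : ℕ) : Type := (Fin (2 * t) × Fin 4) ⊕ Fin 8

/-- The edges inside one diamond `K₄ − e`: `A–C, A–D, B–C, B–D, C–D` where
`A, B, C, D` are encoded as `0, 1, 2, 3`. -/
def diamondRel (a b : Fin 4) : Prop :=
  ((a : ℕ) = 0 ∧ (b : ℕ) = 2) ∨ ((a : ℕ) = 0 ∧ (b : ℕ) = 3) ∨
  ((a : ℕ) = 1 ∧ (b : ℕ) = 2) ∨ ((a : ℕ) = 1 ∧ (b : ℕ) = 3) ∨
  ((a : ℕ) = 2 ∧ (b : ℕ) = 3)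

/-- The base edge relation of `G_t` (symmetrized by `SimpleGraph.fromRel`). -/
def gtRel (t : ℕ) : GtV t → GtV t → Prop
  | Sum.inl (j, a), Sum.inl (k, b) =>
      -- edges inside a diamond, and the connecting edges `B_j A_{j+1}`
      (j = k ∧ diamondRel a b) ∨ ((k : ℕ) = (j : ℕ) + 1 ∧ (a : ℕ) = 1 ∧ (b : ℕ) = 0)
  | Sum.inl (j, a), Sum.inr m =>
      -- the edge `B_{2t-1} z₁` (half of the subdivided connecting edge)
      (j : ℕ) = 2 * t - 1 ∧ (a : ℕ) = 1 ∧ (m : ℕ) = 0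
  | Sum.inr m, Sum.inl (j, a) =>
      -- the edge `z₂ A_0` (the other half of the subdivided connecting edge)
      (m : ℕ) = 1 ∧ (j : ℕ) = 0 ∧ (a : ℕ) = 0
  | Sum.inr m, Sum.inr m' =>
      ((m : ℕ) = 0 ∧ (m' : ℕ) = 1) ∨    -- z₁ z₂
      ((m : ℕ) = 0 ∧ (m' : ℕ) = 2) ∨    -- z₁ c₁
      ((m : ℕ) = 1 ∧ (m' : ℕ) = 3) ∨    -- z₂ c₂
      ((m : ℕ) = 2 ∧ (m' : ℕ) = 4) ∨    -- c₁ c₁ₐ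
      ((m : ℕ) = 4 ∧ (m' : ℕ) = 3) ∨    -- c₁ₐ c₂
      ((m : ℕ) = 3 ∧ (m' : ℕ) = 5) ∨    -- c₂ c₂ₐ
      ((m : ℕ) = 5 ∧ (m' : ℕ) = 2) ∨    -- c₂ₐ c₁
      ((m : ℕ) = 4 ∧ (m' : ℕ) = 6) ∨    -- c₁ₐ v₁
      ((m : ℕ) = 5 ∧ (m' : ℕ) = 7)      -- c₂ₐ v₂

/-- The graph `G_t` on `8t + 8` vertices. -/
def GtGraph (t : ℕ) : SimpleGraph (GtV t) := SimpleGraph.fromRel (gtRel t)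

/-- The leaf `v₁` of `G_t`. -/
def gtv1 (t : ℕ) : GtV t := Sum.inr 6

/-- The leaf `v₂` of `G_t`. -/
def gtv2 (t : ℕ) : GtV t := Sum.inr 7

/-- The vertex `u₁ = B_{t-1}` of `G_t`: an endpoint of the edge joining the `t`-th and
`(t+1)`-st diamond, counting from the subdivided edge. -/
def gtu1 (t : ℕ) (ht : 1 ≤ t) : GtV t := Sum.inl (⟨t - 1, by omega⟩, 1)

/-- The vertex `u₂ = A_t` of `G_t`: the other endpoint of the edge joining the `t`-th
and `(t+1)`-st diamond, counting from the subdivided edge. -/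
def gtu2 (t : ℕ) (ht : 1 ≤ t) : GtV t := Sum.inl (⟨t, by omega⟩, 0)

/-! Reflect the ring of diamonds: diamond `j` goes to diamond `2t − 1 − j` with its two
degree-2 vertices exchanged, `z₁ ↔ z₂` and `c₁ ↔ c₂`, while `c₁ₐ, c₂ₐ` and the leaves stay
fixed. This reverses the ring, so the connecting edge between diamonds `t − 1` and `t`
(0-indexed) is mapped to itself with its endpoints `u₁, u₂` exchanged. -/

namespace SimpleGraph

variable {V : Type*} {G : SimpleGraph V}

lemma fromRel_adj_map_of_rel {r : V → V → Prop} {f : V → V} (hf : Function.Injective f)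
    (hr : ∀ u v, r u v → r (f u) (f v) ∨ r (f v) (f u)) {u v : V}
    (huv : (fromRel r).Adj u v) : (fromRel r).Adj (f u) (f v) := by
  rw [fromRel_adj] at huv ⊢
  obtain ⟨hne, huv | hvu⟩ := huv
  · exact ⟨hf.ne hne, hr u v huv⟩
  · exact ⟨hf.ne hne, (hr v u hvu).symm⟩

def Iso.ofInvolutive (f : V → V) (hf : Function.Involutive f)
    (hadj : ∀ u v, G.Adj u v → G.Adj (f u) (f v)) : G ≃g G where
  toEquiv := hf.toPerm f
  map_rel_iff' {u v} :=
    ⟨fun h => by simpa only [Function.Involutive.coe_toPerm, hf u, hf v] using hadj _ _ h,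
      hadj u v⟩

end SimpleGraph

def diamondSwap : Equiv.Perm (Fin 4) := Equiv.swap 0 1

def outerSwap : Equiv.Perm (Fin 8) := Equiv.swap 0 1 * Equiv.swap 2 3

def gtReflect (t : ℕ) : GtV t → GtV t :=
  Sum.map (Prod.map Fin.rev diamondSwap) outerSwap

lemma gtReflect_involutive (t : ℕ) : Function.Involutive (gtReflect t) := by
  have hd : Function.Involutive diamondSwap := by unfold Function.Involutive diamondSwap; decide
  have ho : Function.Involutive outerSwap := by unfold Function.Involutive outerSwap; decide
  rintro (x | m)
  · simp only [gtReflect, Sum.map_inl, (Fin.rev_involutive.prodMap hd) x]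
  · simp only [gtReflect, Sum.map_inr, ho m]

lemma diamondRel_diamondSwap :
    ∀ a b, diamondRel a b → diamondRel (diamondSwap a) (diamondSwap b) := by
  unfold diamondRel diamondSwap; decide

lemma gtRel_gtReflect (t : ℕ) : ∀ u v, gtRel t u v →
    gtRel t (gtReflect t u) (gtReflect t v) ∨ gtRel t (gtReflect t v) (gtReflect t u) := by
  have hσ : ∀ a : Fin 4, ((a : ℕ) = 0 → (diamondSwap a : ℕ) = 1) ∧
      ((a : ℕ) = 1 → (diamondSwap a : ℕ) = 0) := by
    unfold diamondSwap; decide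
  have hτ : ∀ m : Fin 8, ((m : ℕ) = 0 → (outerSwap m : ℕ) = 1) ∧
      ((m : ℕ) = 1 → (outerSwap m : ℕ) = 0) := by
    unfold outerSwap; decide
  rintro (⟨j, a⟩ | m) (⟨k, b⟩ | m')
  all_goals simp only [gtRel, gtReflect, Sum.map_inl, Sum.map_inr, Prod.map, Fin.val_rev]
  · rintro (⟨rfl, hab⟩ | ⟨hkj, ha, hb⟩)
    · exact .inl (.inl ⟨rfl, diamondRel_diamondSwap a b hab⟩)
    · refine .inr (.inr ⟨by omega, ?_, ?_⟩)
      exacts [(hσ b).1 hb, (hσ a).2 ha]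
  · rintro ⟨hj, ha, hm⟩
    exact .inr ⟨(hτ m').1 hm, by omega, (hσ a).2 ha⟩
  · rintro ⟨hm, hk, hb⟩
    exact .inr ⟨by omega, (hσ b).1 hb, (hτ m).2 hm⟩
  · revert m m'
    unfold outerSwap
    decide

lemma gtReflect_gtu1 (t : ℕ) (ht : 1 ≤ t) : gtReflect t (gtu1 t ht) = gtu2 t ht := by
  simp only [gtReflect, gtu1, gtu2, Sum.map_inl, Prod.map, Sum.inl.injEq, Prod.mk.injEq]
  exact ⟨Fin.ext (by simp only [Fin.val_rev]; omega), rfl⟩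

lemma gtReflect_gtu2 (t : ℕ) (ht : 1 ≤ t) : gtReflect t (gtu2 t ht) = gtu1 t ht := by
  rw [← gtReflect_gtu1 t ht, gtReflect_involutive]

def gtReflectIso (t : ℕ) : GtGraph t ≃g GtGraph t :=
  Iso.ofInvolutive (gtReflect t) (gtReflect_involutive t) fun _ _ =>
    fromRel_adj_map_of_rel (gtReflect_involutive t).injective (gtRel_gtReflect t)

/-- For every `t ≥ 1`, the graph `G_t` admits an automorphism fixing
both leaves `v₁, v₂` and interchanging `u₁` and `u₂`. -/
theorem gt_exists_automorphism_swapping_u1_u2 (t : ℕ) (ht : 1 ≤ t) :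
    ∃ φ : GtGraph t ≃g GtGraph t,
      φ (gtv1 t) = gtv1 t ∧ φ (gtv2 t) = gtv2 t ∧
      φ (gtu1 t ht) = gtu2 t ht ∧ φ (gtu2 t ht) = gtu1 t ht :=
  ⟨gtReflectIso t, rfl, rfl, gtReflect_gtu1 t ht, gtReflect_gtu2 t ht⟩
end

section
/- For every integer t ≥ 1, in the graph G_t one has d(v_1, u_1) = d(v_1, u_2) = d(v_2, u_1) = d(v_2, u_2) = 3t + 3, and every vertex x of G_t other than u_1 and u_2 satisfies d(v_1, x) < 3t + 3; that is, u_1 and u_2 are exactly the vertices at the longest distance from v_1. -/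
open SimpleGraph Finset

/-! Number the ring vertices by their position `p` along the chain of diamonds, from `A₀` at `0`
to `B_{2t-1}` at `6t - 1`: adjacent ring vertices differ in position by at most one, and every
ring vertex has neighbours at positions `p ± 1` (inside that range). Both ends of the chain are at
distance 4 from either leaf, through the 4-cycle and `z₂` or `z₁`, so the distance from a leaf to a
ring vertex is `4 + min p (6t - 1 - p)`. This is certified by checking that the candidate distance
is 1-Lipschitz along edges and drops by one along some edge into every vertex other than the leaf.
Its maximum `3t + 3` is attained only at the middle positions `3t - 1` and `3t`, i.e. at `u₁` and
`u₂`. -/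

namespace SimpleGraph

variable {V : Type*} {G : SimpleGraph V} {f : V → ℕ}

lemma Walk.apply_le_apply_add_length (hf : ∀ a b, G.Adj a b → f b ≤ f a + 1) {u v : V}
    (p : G.Walk u v) : f v ≤ f u + p.length := by
  induction p with
  | nil => simp
  | cons h _ ih => have := hf _ _ h; rw [Walk.length_cons]; omega

lemma exists_walk_length_eq_of_descent {v : V} (hf0 : ∀ x, f x = 0 → x = v)
    (hdesc : ∀ x, f x ≠ 0 → ∃ y, G.Adj y x ∧ f y + 1 = f x) (x : V) :
    ∃ p : G.Walk v x, p.length = f x := by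
  induction hx : f x generalizing x with
  | zero => obtain rfl := hf0 x hx; exact ⟨Walk.nil, rfl⟩
  | succ n ih =>
    obtain ⟨y, hyx, hy⟩ := hdesc x (by omega)
    obtain ⟨p, hp⟩ := ih y (by omega)
    exact ⟨p.concat hyx, by rw [Walk.length_concat]; omega⟩

theorem dist_eq_of_lipschitz_of_descent {v : V} (hv : f v = 0) (hf0 : ∀ x, f x = 0 → x = v)
    (hf : ∀ a b, G.Adj a b → f b ≤ f a + 1)
    (hdesc : ∀ x, f x ≠ 0 → ∃ y, G.Adj y x ∧ f y + 1 = f x) (x : V) :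
    G.dist v x = f x := by
  obtain ⟨p, hp⟩ := exists_walk_length_eq_of_descent hf0 hdesc x
  obtain ⟨q, hq⟩ := Reachable.exists_walk_length_eq_dist ⟨p⟩
  have := q.apply_le_apply_add_length hf
  have := dist_le p
  omega

end SimpleGraph

open Sum

lemma fin_four_cases (a : Fin 4) : a = 0 ∨ a = 1 ∨ a = 2 ∨ a = 3 := by
  revert a; decide

instance : DecidableRel diamondRel := fun _ _ ↦ by unfold diamondRel; infer_instance

def diamondLevel : Fin 4 → ℕ
  | 0 => 0
  | 1 => 2
  | 2 => 1
  | 3 => 1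

lemma diamondLevel_le (a : Fin 4) : diamondLevel a ≤ 2 := by
  revert a; decide

lemma diamondLevel_le_of_diamondRel {a b : Fin 4} (h : diamondRel a b) :
    diamondLevel b ≤ diamondLevel a + 1 ∧ diamondLevel a ≤ diamondLevel b + 1 := by
  revert a b; decide

/-- Position of a ring vertex along the chain of diamonds: in diamond `j`, the vertices
`A, C, D, B` sit at `3j, 3j + 1, 3j + 1, 3j + 2`, so `A₀` is at `0` and `B_{2t-1}` at `6t - 1`. -/
def ringPos {t : ℕ} (x : Fin (2 * t) × Fin 4) : ℕ := 3 * x.1 + diamondLevel x.2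

section Ring

variable {t : ℕ}

lemma adj_of_diamondRel {j : Fin (2 * t)} {a b : Fin 4} (h : diamondRel a b) :
    (GtGraph t).Adj (inl (j, a)) (inl (j, b)) := by
  have hab : a ≠ b := by revert a b; decide
  exact (fromRel_adj _ _ _).2 ⟨by simpa using hab, Or.inl (Or.inl ⟨rfl, h⟩)⟩

lemma adj_of_val_eq_succ {j k : Fin (2 * t)} (h : (k : ℕ) = j + 1) :
    (GtGraph t).Adj (inl (j, 1)) (inl (k, 0)) :=
  (fromRel_adj _ _ _).2 ⟨by simp, Or.inl (Or.inr ⟨h, rfl, rfl⟩)⟩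

lemma ringPos_lt (x : Fin (2 * t) × Fin 4) : ringPos x < 6 * t := by
  have := x.1.isLt
  have := diamondLevel_le x.2
  unfold ringPos
  omega

lemma ringPos_le_of_gtRel {x y : Fin (2 * t) × Fin 4} (h : gtRel t (inl x) (inl y)) :
    ringPos y ≤ ringPos x + 1 ∧ ringPos x ≤ ringPos y + 1 := by
  obtain ⟨j, a⟩ := x
  obtain ⟨k, b⟩ := y
  rcases h with ⟨rfl, h⟩ | ⟨hk, ha, hb⟩
  · have := diamondLevel_le_of_diamondRel h
    dsimp only [ringPos]
    omega
  · obtain rfl : a = 1 := Fin.ext ha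
    obtain rfl : b = 0 := Fin.ext hb
    simp only [ringPos, diamondLevel]
    omega

lemma exists_adj_ringPos_pred (x : Fin (2 * t) × Fin 4) (hx : ringPos x ≠ 0) :
    ∃ y, (GtGraph t).Adj (inl y) (inl x) ∧ ringPos y + 1 = ringPos x := by
  obtain ⟨⟨j, hj⟩, a⟩ := x
  obtain rfl | rfl | rfl | rfl := fin_four_cases a
  · change 3 * j + 0 ≠ 0 at hx
    refine ⟨(⟨j - 1, by omega⟩, 1), adj_of_val_eq_succ (by dsimp only; omega), ?_⟩
    change 3 * (j - 1) + 2 + 1 = 3 * j + 0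
    omega
  · exact ⟨(⟨j, hj⟩, 2), (adj_of_diamondRel (by decide)).symm, rfl⟩
  · exact ⟨(⟨j, hj⟩, 0), adj_of_diamondRel (by decide), rfl⟩
  · exact ⟨(⟨j, hj⟩, 0), adj_of_diamondRel (by decide), rfl⟩

lemma exists_adj_ringPos_succ (x : Fin (2 * t) × Fin 4) (hx : ringPos x + 1 < 6 * t) :
    ∃ y, (GtGraph t).Adj (inl y) (inl x) ∧ ringPos y = ringPos x + 1 := by
  obtain ⟨⟨j, hj⟩, a⟩ := x
  obtain rfl | rfl | rfl | rfl := fin_four_cases a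
  · exact ⟨(⟨j, hj⟩, 2), (adj_of_diamondRel (by decide)).symm, rfl⟩
  · change 3 * j + 2 + 1 < 6 * t at hx
    refine ⟨(⟨j + 1, by omega⟩, 0), (adj_of_val_eq_succ rfl).symm, ?_⟩
    change 3 * (j + 1) + 0 = 3 * j + 2 + 1
    omega
  · exact ⟨(⟨j, hj⟩, 1), adj_of_diamondRel (by decide), rfl⟩
  · exact ⟨(⟨j, hj⟩, 1), adj_of_diamondRel (by decide), rfl⟩

lemma ringPos_eq_three_mul {x : Fin (2 * t) × Fin 4} {n : ℕ} (h : ringPos x = 3 * n) :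
    (x.1 : ℕ) = n ∧ x.2 = 0 := by
  have := diamondLevel_le x.2
  have hlev : diamondLevel x.2 = 0 := by unfold ringPos at h; omega
  have hlev_iff : ∀ a, diamondLevel a = 0 → a = 0 := by decide
  exact ⟨by unfold ringPos at h; omega, hlev_iff _ hlev⟩

lemma ringPos_eq_three_mul_add_two {x : Fin (2 * t) × Fin 4} {n : ℕ} (h : ringPos x = 3 * n + 2) :
    (x.1 : ℕ) = n ∧ x.2 = 1 := by
  have := diamondLevel_le x.2
  have hlev : diamondLevel x.2 = 2 := by unfold ringPos at h; omega
  have hlev_iff : ∀ a, diamondLevel a = 2 → a = 1 := by decide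
  exact ⟨by unfold ringPos at h; omega, hlev_iff _ hlev⟩

lemma adj_inr_one_of_ringPos_eq_zero {x : Fin (2 * t) × Fin 4} (hx : ringPos x = 0) :
    (GtGraph t).Adj (inr 1) (inl x) := by
  obtain ⟨hj, ha⟩ := ringPos_eq_three_mul (n := 0) hx
  exact (fromRel_adj _ _ _).2 ⟨by simp, Or.inl ⟨rfl, hj, by rw [ha]; rfl⟩⟩

lemma adj_inr_zero_of_ringPos_eq {x : Fin (2 * t) × Fin 4} (hx : ringPos x + 1 = 6 * t) :
    (GtGraph t).Adj (inr 0) (inl x) := by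
  obtain ⟨hj, ha⟩ := ringPos_eq_three_mul_add_two (x := x) (n := 2 * t - 1) (by omega)
  exact (fromRel_adj _ _ _).2 ⟨by simp, Or.inr ⟨hj, by rw [ha]; rfl, rfl⟩⟩

end Ring

/-- Candidate distance from a leaf, where `d` lists the distances to the vertices
`z₁ z₂ c₁ c₂ c₁ₐ c₂ₐ v₁ v₂` (in the encoding of `gtRel`); both ends `A₀` and `B_{2t-1}` of the
chain of diamonds are at distance 4 from a leaf. -/
def leafPotential (t : ℕ) (d : Fin 8 → ℕ) : GtV t → ℕ
  | inl x => 4 + min (ringPos x) (6 * t - 1 - ringPos x)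
  | inr m => d m

section Potential

variable {t : ℕ} {d : Fin 8 → ℕ}

lemma leafPotential_le_of_adj (hz₁ : d 0 = 3) (hz₂ : d 1 = 3)
    (hlip : ∀ m m', gtRel t (inr m) (inr m') → d m' ≤ d m + 1 ∧ d m ≤ d m' + 1)
    {a b : GtV t} (hab : (GtGraph t).Adj a b) :
    leafPotential t d b ≤ leafPotential t d a + 1 := by
  suffices key : ∀ a b, gtRel t a b → leafPotential t d b ≤ leafPotential t d a + 1 ∧
      leafPotential t d a ≤ leafPotential t d b + 1 by
    rcases ((fromRel_adj _ _ _).1 hab).2 with h | h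
    exacts [(key a b h).1, (key b a h).2]
  rintro (⟨j, a⟩ | m) (y | m') h
  · have := ringPos_le_of_gtRel h
    simp only [leafPotential]
    omega
  · obtain ⟨hj, ha, hm⟩ := h
    obtain rfl : a = 1 := Fin.ext ha
    obtain rfl : m' = 0 := Fin.ext hm
    have := j.isLt
    simp only [leafPotential, ringPos, diamondLevel, hz₁]
    omega
  · obtain ⟨⟨k, hk⟩, b⟩ := y
    obtain ⟨hm, rfl : k = 0, hb⟩ := h
    obtain rfl : b = 0 := Fin.ext hb
    obtain rfl : m = 1 := Fin.ext hm
    simp only [leafPotential, ringPos, diamondLevel, hz₂]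
    omega
  · exact hlip m m' h

/-- A ring vertex is left towards whichever end of the chain of diamonds is nearer. -/
lemma exists_adj_leafPotential_inl (hz₁ : d 0 = 3) (hz₂ : d 1 = 3) (x : Fin (2 * t) × Fin 4) :
    ∃ y, (GtGraph t).Adj y (inl x) ∧ leafPotential t d y + 1 = leafPotential t d (inl x) := by
  have hlt := ringPos_lt x
  by_cases hnear : ringPos x ≤ 6 * t - 1 - ringPos x
  · by_cases hx : ringPos x = 0
    · exact ⟨inr 1, adj_inr_one_of_ringPos_eq_zero hx, by simp [leafPotential, hz₂, hx]⟩
    · obtain ⟨y, hy, hpos⟩ := exists_adj_ringPos_pred x hx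
      exact ⟨inl y, hy, by simp only [leafPotential]; omega⟩
  · by_cases hx : ringPos x + 1 = 6 * t
    · exact ⟨inr 0, adj_inr_zero_of_ringPos_eq hx, by simp only [leafPotential, hz₁]; omega⟩
    · obtain ⟨y, hy, hpos⟩ := exists_adj_ringPos_succ x (by omega)
      exact ⟨inl y, hy, by simp only [leafPotential]; omega⟩

theorem dist_eq_leafPotential (c : Fin 8) (hzero : ∀ m, d m = 0 ↔ m = c)
    (hz₁ : d 0 = 3) (hz₂ : d 1 = 3)
    (hlip : ∀ m m', gtRel t (inr m) (inr m') → d m' ≤ d m + 1 ∧ d m ≤ d m' + 1)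
    (hdesc : ∀ m, d m ≠ 0 →
      ∃ m', (gtRel t (inr m') (inr m) ∨ gtRel t (inr m) (inr m')) ∧ d m' + 1 = d m)
    (x : GtV t) : (GtGraph t).dist (inr c) x = leafPotential t d x := by
  refine dist_eq_of_lipschitz_of_descent (f := leafPotential t d) (v := inr c) ((hzero c).2 rfl) ?_
    (fun _ _ ↦ leafPotential_le_of_adj hz₁ hz₂ hlip) ?_ x
  · rintro (y | m) h
    · simp [leafPotential] at h
    · exact congrArg inr ((hzero m).1 h)
  · rintro (y | m) h
    · exact exists_adj_leafPotential_inl hz₁ hz₂ y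
    · obtain ⟨m', hrel, h⟩ := hdesc m h
      have hne : (inr m' : GtV t) ≠ inr m := fun he ↦ by cases he; omega
      exact ⟨inr m', (fromRel_adj _ _ _).2 ⟨hne, hrel⟩, h⟩

end Potential

def leafDist₁ : Fin 8 → ℕ := ![3, 3, 2, 2, 1, 3, 0, 4]

def leafDist₂ : Fin 8 → ℕ := ![3, 3, 2, 2, 3, 1, 4, 0]

lemma dist_gtv1 (t : ℕ) (x : GtV t) : (GtGraph t).dist (gtv1 t) x = leafPotential t leafDist₁ x := by
  refine dist_eq_leafPotential 6 (by decide) rfl rfl ?_ ?_ x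
  all_goals simp only [gtRel]; decide

lemma dist_gtv2 (t : ℕ) (x : GtV t) : (GtGraph t).dist (gtv2 t) x = leafPotential t leafDist₂ x := by
  refine dist_eq_leafPotential 7 (by decide) rfl rfl ?_ ?_ x
  all_goals simp only [gtRel]; decide

lemma leafDist₁_le (m : Fin 8) : leafDist₁ m ≤ 4 := by
  revert m; decide

section Extremal

variable {t : ℕ} (ht : 1 ≤ t)

lemma leafPotential_gtu1 (d : Fin 8 → ℕ) : leafPotential t d (gtu1 t ht) = 3 * t + 3 := by
  simp only [gtu1, leafPotential, ringPos, diamondLevel]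
  omega

lemma leafPotential_gtu2 (d : Fin 8 → ℕ) : leafPotential t d (gtu2 t ht) = 3 * t + 3 := by
  simp only [gtu2, leafPotential, ringPos, diamondLevel]
  omega

lemma min_ringPos_lt {x : Fin (2 * t) × Fin 4} (h₁ : inl x ≠ gtu1 t ht) (h₂ : inl x ≠ gtu2 t ht) :
    min (ringPos x) (6 * t - 1 - ringPos x) < 3 * t - 1 := by
  by_contra! hge
  have := ringPos_lt x
  obtain hx | hx : ringPos x = 3 * (t - 1) + 2 ∨ ringPos x = 3 * t := by omega
  · obtain ⟨hj, ha⟩ := ringPos_eq_three_mul_add_two hx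
    exact h₁ (congrArg inl (Prod.ext (Fin.ext hj) ha))
  · obtain ⟨hj, ha⟩ := ringPos_eq_three_mul hx
    exact h₂ (congrArg inl (Prod.ext (Fin.ext hj) ha))

end Extremal

/-- For every `t ≥ 1`, in `G_t` one has
`d(v₁,u₁) = d(v₁,u₂) = d(v₂,u₁) = d(v₂,u₂) = 3t + 3`, and every other vertex `x`
satisfies `d(v₁,x) < 3t + 3`; i.e. `u₁, u₂` are exactly the vertices at the longest
distance from `v₁`. -/
theorem gt_dist_v_u (t : ℕ) (ht : 1 ≤ t) :
    (GtGraph t).dist (gtv1 t) (gtu1 t ht) = 3 * t + 3 ∧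
    (GtGraph t).dist (gtv1 t) (gtu2 t ht) = 3 * t + 3 ∧
    (GtGraph t).dist (gtv2 t) (gtu1 t ht) = 3 * t + 3 ∧
    (GtGraph t).dist (gtv2 t) (gtu2 t ht) = 3 * t + 3 ∧
    ∀ x : GtV t, x ≠ gtu1 t ht → x ≠ gtu2 t ht →
      (GtGraph t).dist (gtv1 t) x < 3 * t + 3 := by
  simp only [dist_gtv1, dist_gtv2, leafPotential_gtu1 ht, leafPotential_gtu2 ht, true_and]
  rintro (x | m) hx₁ hx₂
  · have := min_ringPos_lt ht hx₁ hx₂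
    simp only [leafPotential]
    omega
  · have := leafDist₁_le m
    simp only [leafPotential]
    omega
end

section
/- For every integer t ≥ 3 there exists an integer q ≥ 1 such that D_m(t,q) ≤ 16t³ − 8t² − 26t − 14 ≤ D^m(t,q). -/
/-! Take `q = t² + t - 3`. Then `2q + 3 < 2^(t+2)`, so `a ≤ t + 1`, while `2^(a+1) > 2q + 3` by the
definition of `a`; hence `D_m(t,q) ≤ (4t + 2)·2q + 4t`, which is at most the target because
`8t³ - 20t² - 10t - 2 ≥ 0` for `t ≥ 3`. On the other side, `D^m(t,q) - (16t³ - 8t² - 26t - 14)`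
equals `t²(t - 4)² + 9t + 2`. -/

open Finset

/-- `D_m(t,q) = (3t+1)·2q − 2^(a+1) + (a+1)·2q + 4a` where `a = ⌊log₂(2q+3)⌋`. -/
def Dlow (t q : ℕ) : ℤ :=
  (3 * (t : ℤ) + 1) * (2 * q) - 2 ^ (Nat.log 2 (2 * q + 3) + 1)
    + ((Nat.log 2 (2 * q + 3) : ℤ) + 1) * (2 * q) + 4 * (Nat.log 2 (2 * q + 3) : ℤ)

/-- `D^m(t,q) = (3t+1)·2q + q² + 5q`. -/
def Dhigh (t q : ℕ) : ℤ :=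
  (3 * (t : ℤ) + 1) * (2 * q) + (q : ℤ) ^ 2 + 5 * q

lemma two_mul_sq_add_two_mul_add_three_lt_two_pow (t : ℕ) : 2 * t ^ 2 + 2 * t + 3 < 2 ^ (t + 2) := by
  induction t with
  | zero => norm_num
  | succ n ih =>
    rcases n with _ | n
    · norm_num
    · nlinarith [pow_succ 2 (n + 1 + 2)]

lemma Dlow_le_of_log_le {t q b : ℕ} (hb : Nat.log 2 (2 * q + 3) ≤ b) :
    Dlow t q ≤ (3 * t + 1 + b) * (2 * q) + 4 * b - 4 := by
  set a := Nat.log 2 (2 * q + 3)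
  have hpow : 2 * q + 3 < 2 ^ (a + 1) := Nat.lt_pow_succ_log_self one_lt_two _
  have hpowZ : 2 * (q : ℤ) + 4 ≤ 2 ^ (a + 1) := by exact_mod_cast hpow
  have hbZ : (a : ℤ) ≤ b := by exact_mod_cast hb
  unfold Dlow
  nlinarith [mul_le_mul_of_nonneg_right hbZ (by positivity : (0 : ℤ) ≤ 2 * q)]

/-- For every `t ≥ 3` there exists `q ≥ 1` with
`D_m(t,q) ≤ 16t³ − 8t² − 26t − 14 ≤ D^m(t,q)`. -/
theorem exists_q_between_Dlow_Dhigh (t : ℕ) (ht : 3 ≤ t) :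
    ∃ q : ℕ, 1 ≤ q ∧
      Dlow t q ≤ 16 * (t : ℤ) ^ 3 - 8 * (t : ℤ) ^ 2 - 26 * (t : ℤ) - 14 ∧
      16 * (t : ℤ) ^ 3 - 8 * (t : ℤ) ^ 2 - 26 * (t : ℤ) - 14 ≤ Dhigh t q := by
  have htt : 9 ≤ t ^ 2 := by nlinarith
  have hq : ((t ^ 2 + t - 3 : ℕ) : ℤ) = (t : ℤ) ^ 2 + t - 3 := by
    push_cast [Nat.cast_sub (by omega : 3 ≤ t ^ 2 + t)]
    ring
  have hlog : Nat.log 2 (2 * (t ^ 2 + t - 3) + 3) ≤ t + 1 :=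
    Nat.lt_succ_iff.mp <| Nat.log_lt_of_lt_pow (by omega) <|
      lt_of_le_of_lt (by omega) (two_mul_sq_add_two_mul_add_three_lt_two_pow t)
  have htZ : (3 : ℤ) ≤ t := by exact_mod_cast ht
  refine ⟨t ^ 2 + t - 3, by omega, ?_, ?_⟩
  · calc Dlow t (t ^ 2 + t - 3)
        ≤ (3 * t + 1 + (t + 1 : ℕ)) * (2 * (t ^ 2 + t - 3 : ℕ)) + 4 * (t + 1 : ℕ) - 4 :=
          Dlow_le_of_log_le hlog
      _ ≤ _ := by
          rw [hq]
          push_cast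
          nlinarith [mul_nonneg (by positivity : (0 : ℤ) ≤ t ^ 2) (by linarith : (0 : ℤ) ≤ t - 3)]
  · unfold Dhigh
    rw [hq]
    nlinarith [sq_nonneg ((t : ℤ) * (t - 4))]
end

section
/- Let t ≥ 1 and q ≥ 1 be integers. For every integer D with D_m(t,q) ≤ D ≤ D^m(t,q) there exists a finite sequence (ℓ_1, ℓ_2, …, ℓ_d) of positive integers such that: (i) Σ_{i=1}^{d} ℓ_i = 2q; (ii) 2 ≤ ℓ_i ≤ 2^{i+1} for all i < d and 1 ≤ ℓ_d ≤ 2^{d+1}; (iii) ℓ_{i+1} ≤ 2ℓ_i for all 1 ≤ i < d; and (iv) Σ_{i=1}^{d} (3t + 3 + i)·ℓ_i = D. -/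
open Finset

/-- Auxiliary: the weighted sum of the fully packed front `ℓ_i = 2^(i+1)`, `1 ≤ i < h`. -/
def Fsum (h : ℕ) : ℕ := ∑ i ∈ Finset.Ico 1 h, i * 2 ^ (i + 1)

lemma Fsum_succ (k : ℕ) (hk : 1 ≤ k) : Fsum (k + 1) = Fsum k + k * 2 ^ (k + 1) := by
  unfold Fsum
  exact Finset.sum_Ico_succ_top hk _

lemma Fsum_cast (h : ℕ) (hh : 1 ≤ h) : (Fsum h : ℤ) = ((h : ℤ) - 2) * 2 ^ (h + 1) + 4 := by
  induction h, hh using Nat.le_induction with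
  | base =>
      rw [show Fsum 1 = 0 by unfold Fsum; simp]
      norm_num
  | succ n hn ih =>
      rw [Fsum_succ n hn]
      push_cast
      rw [ih]
      ring

lemma sum_pow_aux (h : ℕ) (hh : 1 ≤ h) :
    (∑ i ∈ Finset.Ico 1 h, 2 ^ (i + 1)) + 4 = 2 ^ (h + 1) := by
  induction h, hh using Nat.le_induction with
  | base => norm_num
  | succ n hn ih =>
      rw [Finset.sum_Ico_succ_top hn]
      have h1 : (2:ℕ) ^ (n + 1 + 1) = 2 * 2 ^ (n + 1) := by ring
      omega

lemma tail_weight (c m : ℕ) :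
    (∑ j ∈ Finset.range m, (c + 1 + j) * 2) = 2 * m * c + m * (m + 1) := by
  induction m with
  | zero => simp
  | succ n ih => rw [Finset.sum_range_succ, ih]; ring

/-- The basic configuration: `ℓ_i = 2^(i+1)` for `i < h`, `ℓ_h = s`,
then `m` twos (with one of them possibly bumped to `3`, at position `h+z`),
and an optional trailing `1` (when `w = 1`). -/
lemma shape (q h s m z T w : ℕ) (hh : 1 ≤ h) (hs2 : 2 ≤ s) (hsc : s ≤ 2 ^ (h + 1))
    (hT : T ≤ 1) (hTz : 1 ≤ T → 1 ≤ z ∧ z ≤ m) (hw : w ≤ 1)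
    (hsum : 2 ^ (h + 1) + s + 2 * m + T + w = 2 * q + 4) :
    ∃ (d : ℕ) (ℓ : ℕ → ℕ), 1 ≤ d ∧ (∑ i ∈ Finset.Icc 1 d, ℓ i) = 2 * q ∧
      (∀ i, 1 ≤ i → i < d → 2 ≤ ℓ i ∧ ℓ i ≤ 2 ^ (i + 1)) ∧
      (1 ≤ ℓ d ∧ ℓ d ≤ 2 ^ (d + 1)) ∧
      (∀ i, 1 ≤ i → i < d → ℓ (i + 1) ≤ 2 * ℓ i) ∧
      (∑ i ∈ Finset.Icc 1 d, i * ℓ i)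
        = Fsum h + h * s + 2 * m * h + m * (m + 1) + T * (h + z) + w * (h + m + 1) := by
  set g : ℕ → ℕ := fun i =>
    if i < h then 2 ^ (i + 1) else if i = h then s else if i ≤ h + m then 2 else 1 with hg
  set tok : ℕ → ℕ := fun i => if i = h + z then T else 0 with htok
  have hglt : ∀ i, i < h → g i = 2 ^ (i + 1) := by
    intro i hi; simp only [hg]; rw [if_pos hi]
  have hgh : g h = s := by
    simp [hg]
  have hgmid : ∀ i, h < i → i ≤ h + m → g i = 2 := by
    intro i h1 h2; simp only [hg]; rw [if_neg (by omega), if_neg (by omega), if_pos h2]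
  have hgend : ∀ i, h + m < i → g i = 1 := by
    intro i h1; simp only [hg]; rw [if_neg (by omega), if_neg (by omega), if_neg (by omega)]
  have htok0 : ∀ i, i ≤ h ∨ h + m < i → tok i = 0 := by
    intro i hi; simp only [htok]; split_ifs with he
    · omega
    · rfl
  have htokle : ∀ i, tok i ≤ T := by
    intro i; simp only [htok]; split_ifs <;> omega
  have hpow : ∀ i : ℕ, 1 ≤ i → 4 ≤ 2 ^ (i + 1) := by
    intro i hi
    calc (4:ℕ) = 2 ^ 2 := by norm_num
    _ ≤ 2 ^ (i + 1) := Nat.pow_le_pow_right (by norm_num) (by omega)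
  have hIcc : Finset.Icc 1 (h + m + w) = Finset.Ico 1 (h + m + w + 1) :=
    (Finset.Ico_add_one_right_eq_Icc 1 _)
  have hsplit : ∀ f : ℕ → ℕ, (∑ i ∈ Finset.Ico 1 (h + m + w + 1), f i)
      = (∑ i ∈ Finset.Ico 1 h, f i) + f h + (∑ i ∈ Finset.Ico (h + 1) (h + m + 1), f i)
        + (∑ i ∈ Finset.Ico (h + m + 1) (h + m + w + 1), f i) := by
    intro f
    rw [← Finset.sum_Ico_consecutive f (show 1 ≤ h + m + 1 by omega)
          (show h + m + 1 ≤ h + m + w + 1 by omega),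
        ← Finset.sum_Ico_consecutive f (show 1 ≤ h + 1 by omega)
          (show h + 1 ≤ h + m + 1 by omega),
        Finset.sum_Ico_succ_top hh f]
  set lf : ℕ → ℕ := fun i => g i + tok i with hlf
  refine ⟨h + m + w, lf, by omega, ?_, ?_, ?_, ?_, ?_⟩
  · -- total sum is 2q
    simp only [hlf]
    have htoksum : (∑ i ∈ Finset.Ico 1 (h + m + w + 1), tok i) = T := by
      simp only [htok]
      rw [Finset.sum_ite_eq' (Finset.Ico 1 (h + m + w + 1)) (h + z) (fun _ => T)]
      split_ifs with hmem
      · rfl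
      · rw [Finset.mem_Ico] at hmem; omega
    have p1 : (∑ i ∈ Finset.Ico 1 h, g i) + 4 = 2 ^ (h + 1) := by
      rw [show (∑ i ∈ Finset.Ico 1 h, g i) = ∑ i ∈ Finset.Ico 1 h, 2 ^ (i + 1) from
        Finset.sum_congr rfl fun i hi => by
          rw [Finset.mem_Ico] at hi; exact hglt i hi.2]
      exact sum_pow_aux h hh
    have p3 : (∑ i ∈ Finset.Ico (h + 1) (h + m + 1), g i) = 2 * m := by
      rw [show (∑ i ∈ Finset.Ico (h + 1) (h + m + 1), g i)
            = ∑ i ∈ Finset.Ico (h + 1) (h + m + 1), 2 from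
        Finset.sum_congr rfl fun i hi => by
          rw [Finset.mem_Ico] at hi; exact hgmid i (by omega) (by omega)]
      rw [Finset.sum_const, Nat.card_Ico, smul_eq_mul]
      omega
    have p4 : (∑ i ∈ Finset.Ico (h + m + 1) (h + m + w + 1), g i) = w := by
      rw [show (∑ i ∈ Finset.Ico (h + m + 1) (h + m + w + 1), g i)
            = ∑ i ∈ Finset.Ico (h + m + 1) (h + m + w + 1), 1 from
        Finset.sum_congr rfl fun i hi => by
          rw [Finset.mem_Ico] at hi; exact hgend i (by omega)]
      rw [Finset.sum_const, Nat.card_Ico, smul_eq_mul]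
      omega
    have : (∑ i ∈ Finset.Icc 1 (h + m + w), (g i + tok i))
        = (∑ i ∈ Finset.Ico 1 (h + m + w + 1), g i)
          + ∑ i ∈ Finset.Ico 1 (h + m + w + 1), tok i := by
      rw [hIcc, Finset.sum_add_distrib]
    rw [this, hsplit g, htoksum, hgh, p3, p4]
    omega
  · -- bounds 2 ≤ ℓ i ≤ 2^(i+1) for i < d
    intro i h1 h2
    simp only [hlf]
    have hp := hpow i h1
    rcases Nat.lt_trichotomy i h with hih | hih | hih
    · rw [hglt i hih, htok0 i (Or.inl (by omega))]
      omega
    · subst hih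
      rw [hgh, htok0 i (Or.inl (le_refl i))]
      omega
    · rw [hgmid i hih (by omega)]
      have := htokle i
      omega
  · -- last entry
    simp only [hlf]
    have hp := hpow (h + m + w) (by omega)
    rcases (show w = 1 ∨ (w = 0 ∧ m = 0) ∨ (w = 0 ∧ 1 ≤ m) by omega) with h' | ⟨h1', h2'⟩ | ⟨h1', h2'⟩
    · rw [hgend (h + m + w) (by omega), htok0 (h + m + w) (Or.inr (by omega))]
      omega
    · rw [show h + m + w = h by omega, hgh, htok0 h (Or.inl (le_refl h))]
      have hcap : (2:ℕ) ^ (h + 1) ≤ 2 ^ (h + m + w + 1) :=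
        Nat.pow_le_pow_right (by norm_num) (by omega)
      omega
    · rw [hgmid (h + m + w) (by omega) (by omega)]
      have := htokle (h + m + w)
      omega
  · -- doubling condition
    intro i h1 h2
    simp only [hlf]
    rcases Nat.lt_trichotomy (i + 1) h with hc | hc | hc
    · rw [hglt (i + 1) hc, hglt i (by omega), htok0 (i + 1) (Or.inl (by omega)),
        htok0 i (Or.inl (by omega))]
      have : (2:ℕ) ^ (i + 1 + 1) = 2 * 2 ^ (i + 1) := by ring
      omega
    · have hi' : h = i + 1 := hc.symm
      subst hi'
      rw [hgh, hglt i (by omega), htok0 (i + 1) (Or.inl (le_refl _)),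
        htok0 i (Or.inl (by omega))]
      have : (2:ℕ) ^ (i + 1 + 1) = 2 * 2 ^ (i + 1) := by ring
      omega
    · have hub : g (i + 1) + tok (i + 1) ≤ 3 := by
        rcases (show i + 1 ≤ h + m ∨ h + m < i + 1 by omega) with hcc | hcc
        · rw [hgmid (i + 1) (by omega) hcc]
          have := htokle (i + 1)
          omega
        · rw [hgend (i + 1) hcc, htok0 (i + 1) (Or.inr hcc)]
          omega
      have hlb : 2 ≤ g i + tok i := by
        rcases (show i = h ∨ h < i by omega) with hcc | hcc
        · subst hcc
          rw [hgh]
          omega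
        · rw [hgmid i hcc (by omega)]
          omega
      omega
  · -- weighted sum
    simp only [hlf]
    have wtok : (∑ i ∈ Finset.Ico 1 (h + m + w + 1), i * tok i) = T * (h + z) := by
      simp only [htok, mul_ite, mul_zero]
      rw [Finset.sum_ite_eq' (Finset.Ico 1 (h + m + w + 1)) (h + z) (fun i => i * T)]
      split_ifs with hmem
      · ring
      · rw [Finset.mem_Ico] at hmem
        have : T = 0 := by omega
        simp [this]
    have w1 : (∑ i ∈ Finset.Ico 1 h, i * g i) = Fsum h := by
      unfold Fsum
      exact Finset.sum_congr rfl fun i hi => by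
        rw [Finset.mem_Ico] at hi; rw [hglt i hi.2]
    have w3 : (∑ i ∈ Finset.Ico (h + 1) (h + m + 1), i * g i) = 2 * m * h + m * (m + 1) := by
      rw [show (∑ i ∈ Finset.Ico (h + 1) (h + m + 1), i * g i)
            = ∑ i ∈ Finset.Ico (h + 1) (h + m + 1), i * 2 from
        Finset.sum_congr rfl fun i hi => by
          rw [Finset.mem_Ico] at hi; rw [hgmid i (by omega) (by omega)]]
      rw [Finset.sum_Ico_eq_sum_range]
      rw [show h + m + 1 - (h + 1) = m by omega]
      exact tail_weight h m
    have w4 : (∑ i ∈ Finset.Ico (h + m + 1) (h + m + w + 1), i * g i) = w * (h + m + 1) := by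
      rcases (show w = 0 ∨ w = 1 by omega) with hw0 | hw1
      · rw [hw0]
        simp
      · rw [hw1]
        rw [Finset.sum_Ico_succ_top (le_refl (h + m + 1)), Finset.Ico_self, Finset.sum_empty,
          hgend (h + m + 1) (by omega)]
        ring
    have : (∑ i ∈ Finset.Icc 1 (h + m + w), i * (g i + tok i))
        = (∑ i ∈ Finset.Ico 1 (h + m + w + 1), i * g i)
          + ∑ i ∈ Finset.Ico 1 (h + m + w + 1), i * tok i := by
      rw [hIcc]
      simp only [mul_add]
      rw [Finset.sum_add_distrib]
    rw [this, hsplit (fun i => i * g i), wtok, w1, hgh, w3, w4]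
    ring

/-- The main search: any `S` between the minimum weight of the current configuration
family and the global maximum `q² + q` is realisable. -/
lemma search (q : ℕ) : ∀ N h v m, 2 ^ (h + 1) + 2 * v ≤ N → 1 ≤ h → 1 ≤ v →
    2 * v ≤ 2 ^ (h + 1) → 2 ^ (h + 1) + 2 * v + 2 * m = 2 * q + 4 →
    ∀ S, Fsum h + (2 * v + 2 * m) * h + m * (m + 1) ≤ S → S ≤ q ^ 2 + q →
    ∃ (d : ℕ) (ℓ : ℕ → ℕ), 1 ≤ d ∧ (∑ i ∈ Finset.Icc 1 d, ℓ i) = 2 * q ∧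
      (∀ i, 1 ≤ i → i < d → 2 ≤ ℓ i ∧ ℓ i ≤ 2 ^ (i + 1)) ∧
      (1 ≤ ℓ d ∧ ℓ d ≤ 2 ^ (d + 1)) ∧
      (∀ i, 1 ≤ i → i < d → ℓ (i + 1) ≤ 2 * ℓ i) ∧
      (∑ i ∈ Finset.Icc 1 d, i * ℓ i) = S := by
  intro N
  induction N using Nat.strong_induction_on with
  | _ N ih =>
  intro h v m hN hh hv hvc heq S hBS hStop
  rcases eq_or_lt_of_le hBS with hEq | hLt
  · obtain ⟨d, ℓ, c1, c2, c3, c4, c5, c6⟩ :=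
      shape q h (2 * v) m 0 0 0 hh (by omega) (by omega) (by omega) (by omega) (by omega)
        (by omega)
    refine ⟨d, ℓ, c1, c2, c3, c4, c5, ?_⟩
    rw [c6, ← hEq]
    ring
  · by_cases hv1 : v = 1
    · subst hv1
      rcases Nat.lt_or_ge h 2 with hh2 | hh2
      · exfalso
        have hh1 : h = 1 := by omega
        subst hh1
        have hF : Fsum 1 = 0 := by unfold Fsum; simp
        have hq' : q = m + 1 := by
          have h4 : (2:ℕ) ^ (1 + 1) = 4 := by norm_num
          omega
        subst hq'
        rw [hF] at hLt
        nlinarith [hLt, hStop]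
      · obtain ⟨k, rfl⟩ : ∃ k, h = k + 1 := ⟨h - 1, by omega⟩
        have hk : 1 ≤ k := by omega
        have p2 : (2:ℕ) ^ (k + 1) = 2 * 2 ^ k := by ring
        have p3 : (2:ℕ) ^ (k + 1 + 1) = 2 * 2 ^ (k + 1) := by ring
        have hFs : Fsum (k + 1) = Fsum k + k * 2 ^ (k + 1) := Fsum_succ k hk
        have hBeq : Fsum k + (2 * 2 ^ k + 2 * (m + 1)) * k + (m + 1) * (m + 1 + 1)
            = Fsum (k + 1) + (2 * 1 + 2 * m) * (k + 1) + m * (m + 1) := by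
          rw [hFs, ← p2]
          ring
        have hpos : 0 < 2 ^ k := Nat.pow_pos (by norm_num)
        exact ih (N - 1) (by omega) k (2 ^ k) (m + 1) (by omega) hk (by omega) (by omega)
          (by omega) S (by linarith [hBS, hBeq]) hStop
    · have hv2 : 2 ≤ v := by omega
      obtain ⟨u, rfl⟩ : ∃ u, v = u + 2 := ⟨v - 2, by omega⟩
      by_cases hsml : S ≤ Fsum h + (2 * (u + 2) + 2 * m) * h + m * (m + 1) + 2 * m + 1
      · set B := Fsum h + (2 * (u + 2) + 2 * m) * h + m * (m + 1) with hB
        have hδ : B + (S - B) = S := by omega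
        set δ := S - B with hδdef
        have hδ1 : 1 ≤ δ := by omega
        have hδ2 : δ ≤ 2 * m + 1 := by omega
        rcases (show (1 ≤ δ ∧ δ ≤ m) ∨ δ = m + 1 ∨ (m + 2 ≤ δ ∧ δ ≤ 2 * m + 1) by omega) with
          ⟨hd1, hd2⟩ | hd | ⟨hd1, hd2⟩
        · obtain ⟨d, ℓ, c1, c2, c3, c4, c5, c6⟩ :=
            shape q h (2 * u + 3) m δ 1 0 hh (by omega) (by omega) (by omega)
              (fun _ => ⟨hd1, hd2⟩) (by omega) (by omega)
          refine ⟨d, ℓ, c1, c2, c3, c4, c5, ?_⟩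
          rw [c6]
          have he : Fsum h + h * (2 * u + 3) + 2 * m * h + m * (m + 1) + 1 * (h + δ)
              + 0 * (h + m + 1) = B + δ := by
            rw [hB]; ring
          rw [he]; exact hδ
        · obtain ⟨d, ℓ, c1, c2, c3, c4, c5, c6⟩ :=
            shape q h (2 * u + 3) m 0 0 1 hh (by omega) (by omega) (by omega)
              (by omega) (by omega) (by omega)
          refine ⟨d, ℓ, c1, c2, c3, c4, c5, ?_⟩
          rw [c6]
          have he : Fsum h + h * (2 * u + 3) + 2 * m * h + m * (m + 1) + 0 * (h + 0)
              + 1 * (h + m + 1) = B + δ := by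
            rw [hB, hd]; ring
          rw [he]; exact hδ
        · obtain ⟨z, hz⟩ : ∃ z, δ = z + (m + 1) := ⟨δ - (m + 1), by omega⟩
          have hz1 : 1 ≤ z := by omega
          have hz2 : z ≤ m := by omega
          obtain ⟨d, ℓ, c1, c2, c3, c4, c5, c6⟩ :=
            shape q h (2 * u + 2) m z 1 1 hh (by omega) (by omega) (by omega)
              (fun _ => ⟨hz1, hz2⟩) (by omega) (by omega)
          refine ⟨d, ℓ, c1, c2, c3, c4, c5, ?_⟩
          rw [c6]
          have he : Fsum h + h * (2 * u + 2) + 2 * m * h + m * (m + 1) + 1 * (h + z)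
              + 1 * (h + m + 1) = B + δ := by
            rw [hB, hz]; ring
          rw [he]; exact hδ
      · push_neg at hsml
        have hBeq : Fsum h + (2 * (u + 1) + 2 * (m + 1)) * h + (m + 1) * (m + 1 + 1)
            = Fsum h + (2 * (u + 2) + 2 * m) * h + m * (m + 1) + (2 * m + 2) := by ring
        exact ih (N - 1) (by omega) h (u + 1) (m + 1) (by omega) hh (by omega) (by omega)
          (by omega) S (by linarith [hsml, hBeq]) hStop

/-- For all `t, q ≥ 1` and every integer `D` with
`D_m(t,q) ≤ D ≤ D^m(t,q)` there exists a finite sequence `(ℓ_1, …, ℓ_d)` of positive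
integers with total sum `2q`, `2 ≤ ℓ_i ≤ 2^(i+1)` for `i < d`, `1 ≤ ℓ_d ≤ 2^(d+1)`,
`ℓ_{i+1} ≤ 2 ℓ_i`, and `Σ_{i=1}^d (3t+3+i)·ℓ_i = D`. -/
theorem exists_sequence_realising_D (t q : ℕ) (ht : 1 ≤ t) (hq : 1 ≤ q)
    (D : ℤ) (hD₁ : Dlow t q ≤ D) (hD₂ : D ≤ Dhigh t q) :
    ∃ (d : ℕ) (ℓ : ℕ → ℕ), 1 ≤ d ∧
      (∑ i ∈ Finset.Icc 1 d, ℓ i) = 2 * q ∧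
      (∀ i, 1 ≤ i → i < d → 2 ≤ ℓ i ∧ ℓ i ≤ 2 ^ (i + 1)) ∧
      (1 ≤ ℓ d ∧ ℓ d ≤ 2 ^ (d + 1)) ∧
      (∀ i, 1 ≤ i → i < d → ℓ (i + 1) ≤ 2 * ℓ i) ∧
      ((∑ i ∈ Finset.Icc 1 d, (3 * t + 3 + i) * ℓ i : ℕ) : ℤ) = D := by
  have ha2 : 2 ≤ Nat.log 2 (2 * q + 3) := by
    have h4 : (2:ℕ) ^ 2 = 4 := by norm_num
    exact (Nat.le_log_iff_pow_le (by norm_num) (by omega)).mpr (by omega)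
  obtain ⟨k, hak⟩ : ∃ k, Nat.log 2 (2 * q + 3) = k + 1 :=
    ⟨Nat.log 2 (2 * q + 3) - 1, by omega⟩
  have hk1 : 1 ≤ k := by omega
  have hlow : 2 ^ (k + 1) ≤ 2 * q + 3 := by
    rw [← hak]; exact Nat.pow_log_le_self 2 (by omega)
  have hhigh : 2 * q + 3 < 2 ^ (k + 1 + 1) := by
    rw [← hak]; exact Nat.lt_pow_succ_log_self (by norm_num) _
  have pk : (2:ℕ) ^ (k + 1) = 2 * 2 ^ k := by ring
  have pk2 : (2:ℕ) ^ (k + 1 + 1) = 2 * 2 ^ (k + 1) := by ring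
  have h2k : 2 ^ k ≤ q + 1 := by omega
  set v₀ := q + 2 - 2 ^ k with hv₀
  have hv₀1 : 1 ≤ v₀ := by omega
  have heq0 : 2 ^ (k + 1) + 2 * v₀ + 2 * 0 = 2 * q + 4 := by omega
  have hcap : 2 * v₀ ≤ 2 ^ (k + 1) := by omega
  set E : ℤ := (3 * (t : ℤ) + 3) * (2 * (q : ℤ)) with hE
  have key1 : ((Fsum k + (2 * v₀ + 2 * 0) * k + 0 * (0 + 1) : ℕ) : ℤ) = Dlow t q - E := by
    have hFc := Fsum_cast k hk1
    have hv₀c : (v₀ : ℤ) = (q : ℤ) + 2 - 2 ^ k := by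
      rw [hv₀, Nat.cast_sub (by omega)]
      push_cast
      ring
    simp only [Dlow, hE, hak]
    push_cast
    rw [hFc, hv₀c]
    ring
  have key2 : ((q ^ 2 + q : ℕ) : ℤ) = Dhigh t q - E := by
    simp only [Dhigh, hE]
    push_cast
    ring
  have hDE : (0:ℤ) ≤ D - E := by
    have h0 : (0:ℤ) ≤ ((Fsum k + (2 * v₀ + 2 * 0) * k + 0 * (0 + 1) : ℕ) : ℤ) :=
      Int.natCast_nonneg _
    linarith [key1, hD₁]
  have hScast : (((D - E).toNat : ℤ)) = D - E := Int.toNat_of_nonneg hDE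
  have hB₀S : Fsum k + (2 * v₀ + 2 * 0) * k + 0 * (0 + 1) ≤ (D - E).toNat := by
    rw [Int.le_toNat hDE]
    linarith [key1, hD₁]
  have hStop : (D - E).toNat ≤ q ^ 2 + q := by
    rw [Int.toNat_le]
    linarith [key2, hD₂]
  obtain ⟨d, ℓ, c1, c2, c3, c4, c5, c6⟩ :=
    search q (2 ^ (k + 1) + 2 * v₀) k v₀ 0 (le_refl _) hk1 hv₀1 hcap heq0
      ((D - E).toNat) hB₀S hStop
  refine ⟨d, ℓ, c1, c2, c3, c4, c5, ?_⟩
  have hsplit : (∑ i ∈ Finset.Icc 1 d, (3 * t + 3 + i) * ℓ i)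
      = (3 * t + 3) * (2 * q) + (D - E).toNat := by
    have hterm : ∀ i ∈ Finset.Icc 1 d, (3 * t + 3 + i) * ℓ i
        = (3 * t + 3) * ℓ i + i * ℓ i := fun i _ => by ring
    rw [Finset.sum_congr rfl hterm, Finset.sum_add_distrib, ← Finset.mul_sum, c2, c6]
  rw [hsplit]
  push_cast
  rw [hScast]
  have : E = (3 * (t : ℤ) + 3) * (2 * (q : ℤ)) := hE
  linarith [this]
end

section
/- Let q ≥ 1 be an integer and let L = (ℓ_1, …, ℓ_d) be a sequence obtained from L_m by finitely many applications of the modification M. Set ℓ_{d+1} = 0 and suppose an eligible index exists; let i be the smallest eligible index. If ℓ_i = 3 and ℓ_{i+1} = 3, then ℓ_j = 2 for all 1 ≤ j < i. -/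
/-! Finite sequences `(ℓ_1, …, ℓ_d)` are encoded as lists `L : List ℕ`, where the
`i`-th entry (1-indexed) is `L.getD (i-1) 0`; in particular entries beyond the end
(such as `ℓ_{d+1}`) are read as `0`. -/

/-- The `i`-th entry (0-indexed) of a sequence, with out-of-range entries read as `0`. -/
def entry (L : List ℕ) (i : ℕ) : ℕ := L.getD i 0

/-- Index `i` (0-indexed) is eligible for the modification: `ℓ_i ≥ 3` and either
`2(ℓ_i − 1) > ℓ_{i+1} + 1` or `ℓ_i = ℓ_{i+1} = 3`. -/
def Eligible (L : List ℕ) (i : ℕ) : Prop :=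
  i < L.length ∧ 3 ≤ entry L i ∧
    (entry L (i + 1) + 1 < 2 * (entry L i - 1) ∨ (entry L i = 3 ∧ entry L (i + 1) = 3))

/-- The result of modifying the sequence at index `i`: decrease `ℓ_i` by one and
increase `ℓ_{i+1}` by one (appending a new last entry `1` if `i` is the last index). -/
def modifyAt (L : List ℕ) (i : ℕ) : List ℕ :=
  if i + 1 < L.length then
    (L.set i (entry L i - 1)).set (i + 1) (entry L (i + 1) + 1)
  else
    L.set i (entry L i - 1) ++ [1]

/-- One application of the modification `M`: it acts at the smallest eligible index. -/
def MStep (L L' : List ℕ) : Prop :=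
  ∃ i, Eligible L i ∧ (∀ j < i, ¬ Eligible L j) ∧ L' = modifyAt L i

/-- The short sequence `L_m = (ℓ_1,…,ℓ_{a−1})` with `ℓ_i = 2^(i+1)` for `i ≤ a−2` and
`ℓ_{a−1} = 2q − 2^a + 4`, where `a = ⌊log₂(2q+3)⌋`. -/
def Lm (q : ℕ) : List ℕ :=
  List.ofFn (fun j : Fin (Nat.log 2 (2 * q + 3) - 1) =>
    if (j : ℕ) + 3 ≤ Nat.log 2 (2 * q + 3) then 2 ^ ((j : ℕ) + 2)
    else 2 * q + 4 - 2 ^ Nat.log 2 (2 * q + 3))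

lemma entry_set (L : List ℕ) (k v j : ℕ) :
    entry (L.set k v) j = if k = j ∧ j < L.length then v else entry L j := by
  unfold entry
  simp only [List.getD, List.getElem?_set]
  by_cases hk : k = j
  · subst hk
    by_cases hl : k < L.length
    · simp [hl]
    · skip
      simp [hl, List.getElem?_eq_none (by omega : L.length ≤ k)]
  · simp [hk]

lemma entry_append_left (A B : List ℕ) (j : ℕ) (h : j < A.length) :
    entry (A ++ B) j = entry A j := List.getD_append A B 0 j h

lemma entry_lt_length {L : List ℕ} {k : ℕ} (h : entry L k ≠ 0) : k < L.length := by
  by_contra hk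
  exact h (List.getD_eq_default L 0 (by omega))

/-- Invariant: every entry except possibly the last one is at least `2`. -/
def InvTwo (L : List ℕ) : Prop := ∀ j, j + 1 < L.length → 2 ≤ entry L j

lemma inv_Lm (q : ℕ) : InvTwo (Lm q) := by
  intro j hj
  set a := Nat.log 2 (2 * q + 3) with ha
  have hlen : (Lm q).length = a - 1 := by simp [Lm, ha]
  have hjl : j < (Lm q).length := by omega
  have hje : j < a - 1 := by omega
  have : entry (Lm q) j = if j + 3 ≤ a then 2 ^ (j + 2) else 2 * q + 4 - 2 ^ a := by
    unfold entry
    rw [List.getD_eq_getElem _ _ hjl]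
    simp [Lm, ha]
  rw [this]
  split
  · calc (2:ℕ) = 2 ^ 1 := rfl
      _ ≤ 2 ^ (j + 2) := Nat.pow_le_pow_right (by norm_num) (by omega)
  · have h1 : 2 ^ a ≤ 2 * q + 3 := Nat.pow_log_le_self 2 (by omega)
    have h2 : 0 < a := Nat.log_pos (by norm_num) (by omega)
    have h3 : 2 ∣ 2 ^ a := dvd_pow_self 2 (by omega)
    omega

lemma inv_step {L L' : List ℕ} (h : MStep L L') (hInv : InvTwo L) : InvTwo L' := by
  obtain ⟨i, ⟨hil, hi3, _⟩, -, rfl⟩ := h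
  unfold modifyAt
  by_cases hlen : i + 1 < L.length
  · rw [if_pos hlen]
    intro j hj
    have hjlen : j + 1 < L.length := by simpa using hj
    rw [entry_set, entry_set]
    simp only [List.length_set]
    by_cases h1 : i + 1 = j
    · have hi2 : 2 ≤ entry L (i+1) := hInv (i+1) (by omega)
      rw [if_pos ⟨h1, by omega⟩]
      omega
    · rw [if_neg (by tauto)]
      by_cases h2 : i = j
      · rw [if_pos ⟨h2, by omega⟩]; subst h2; omega
      · rw [if_neg (by tauto)]
        exact hInv j hjlen
  · rw [if_neg hlen]
    intro j hj
    have hieq : i = L.length - 1 := by omega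
    have hjlen : j < L.length := by
      simp only [List.length_append, List.length_set, List.length_cons,
        List.length_nil] at hj
      omega
    rw [entry_append_left _ _ _ (by simpa using hjlen)]
    rw [entry_set]
    by_cases h2 : i = j
    · rw [if_pos ⟨h2, by omega⟩]; subst h2; omega
    · rw [if_neg (by tauto)]
      exact hInv j (by omega)

lemma succ_ge_four (L : List ℕ) (i : ℕ) (hmin : ∀ j < i, ¬ Eligible L j)
    (hilen : i < L.length) :
    ∀ j < i, 3 ≤ entry L j → 4 ≤ entry L (j + 1) := by
  intro j hj h3
  by_contra h
  exact hmin j hj ⟨lt_trans hj hilen, h3, by omega⟩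

lemma before_le_two (L : List ℕ) (i : ℕ) (hmin : ∀ j < i, ¬ Eligible L j)
    (hilen : i < L.length) (h3 : entry L i = 3) :
    ∀ j < i, entry L j ≤ 2 := by
  intro j hj
  by_contra h
  have key : ∀ k, j < k → k ≤ i → 4 ≤ entry L k := by
    intro k
    induction k with
    | zero => omega
    | succ n ih =>
      intro h1 h2
      rcases Nat.lt_or_ge j n with hlt | hge
      · exact succ_ge_four L i hmin hilen n (by omega) (by have := ih hlt (by omega); omega)
      · have hnj : n = j := by omega
        subst hnj
        exact succ_ge_four L i hmin hilen n hj (by omega)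
  have := key i hj le_rfl
  omega

lemma inv_reach (q : ℕ) (L : List ℕ) (hL : Relation.ReflTransGen MStep (Lm q) L) :
    InvTwo L := by
  induction hL with
  | refl => exact inv_Lm q
  | tail _ step ih => exact inv_step step ih

/-- If `L` is obtained from `L_m` by finitely many applications of
the modification `M`, `i` is the smallest eligible index, and `ℓ_i = ℓ_{i+1} = 3`,
then all earlier entries equal `2`. -/
theorem entries_before_min_eligible_eq_two (q : ℕ) (hq : 1 ≤ q) (L : List ℕ)
    (hL : Relation.ReflTransGen MStep (Lm q) L)
    (i : ℕ) (hi : Eligible L i) (hmin : ∀ j < i, ¬ Eligible L j)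
    (h3 : entry L i = 3) (h3' : entry L (i + 1) = 3) :
    ∀ j < i, entry L j = 2 := by
  have hInv : InvTwo L := inv_reach q L hL
  intro j hj
  have hilen : i < L.length := hi.1
  have hi1len : i + 1 < L.length := entry_lt_length (by omega)
  have hlow : 2 ≤ entry L j := hInv j (by omega)
  have hhigh : entry L j ≤ 2 := before_le_two L i hmin hilen h3 j hj
  omega
end

section
/- Every vertex of the cycle graph C_11 on 11 vertices is a Šoltés vertex; that is, for every vertex v of C_11, the graph C_11 − v (a path on 10 vertices) is connected and W(C_11 − v) = W(C_11) = 165. -/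
/-
Deleting a vertex `v` from the cycle `C₁₁` and reading the remaining vertices from the successor
of `v` onwards gives the path `P₁₀`, so `C₁₁ - v` is connected and has the Wiener index of `P₁₀`.
Distances are `|i - j|` on the path and `min (j - i) (i - j)` (mod 11) on the cycle, both
certified by a breadth-first labelling, and both distance sums come to `2 · 165`.
-/

open SimpleGraph Finset

namespace Fin

-- `omega` cannot see through `%` by a variable modulus; these forms of `Fin` arithmetic avoid it.
lemma val_sub_add_val_eq_or {m : ℕ} (a b : Fin m) :
    (a - b).val + b.val = a.val ∨ (a - b).val + b.val = a.val + m := by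
  rcases le_or_gt b a with h | h
  · left; rw [coe_sub_iff_le.mpr h]; omega
  · right; rw [coe_sub_iff_lt.mpr h]; omega

lemma val_add_eq_or {m : ℕ} (a b : Fin m) :
    (a + b).val = a.val + b.val ∨ (a + b).val + m = a.val + b.val := by
  rw [val_add_eq_ite]; split_ifs <;> omega

end Fin

namespace SimpleGraph

variable {V W : Type*} {G : SimpleGraph V} {G' : SimpleGraph W}

lemma Walk.le_add_length_of_adj_le_succ (f : V → ℕ) (hf : ∀ x y, G.Adj x y → f y ≤ f x + 1)
    {x y : V} (p : G.Walk x y) : f y ≤ f x + p.length := by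
  induction p with
  | nil => simp
  | cons h _ ih => have := hf _ _ h; rw [Walk.length_cons]; omega

lemma exists_walk_length_eq_of_exists_adj_succ_eq {u : V} (f : V → ℕ) (hu : f u = 0)
    (hf : ∀ x ≠ u, ∃ y, G.Adj x y ∧ f y + 1 = f x) (x : V) :
    ∃ p : G.Walk x u, p.length = f x := by
  induction hx : f x using Nat.strong_induction_on generalizing x with
  | _ k ih =>
    by_cases hxu : x = u
    · subst hxu; exact ⟨.nil, by simp [hu, ← hx]⟩
    obtain ⟨y, hxy, hy⟩ := hf x hxu
    obtain ⟨p, hp⟩ := ih (f y) (by omega) y rfl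
    exact ⟨.cons hxy p, by simp [hp]; omega⟩

/-- A breadth-first labelling from `u` certifies the distances from `u`. -/
theorem dist_eq_of_adj_le_succ_of_exists_adj_succ_eq {u : V} (f : V → ℕ) (hu : f u = 0)
    (hle : ∀ x y, G.Adj x y → f y ≤ f x + 1)
    (hdesc : ∀ x ≠ u, ∃ y, G.Adj x y ∧ f y + 1 = f x) (w : V) :
    G.dist u w = f w := by
  obtain ⟨p, hp⟩ := exists_walk_length_eq_of_exists_adj_succ_eq f hu hdesc w
  obtain ⟨q, hq⟩ := (Reachable.symm ⟨p⟩).exists_walk_length_eq_dist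
  have := q.le_add_length_of_adj_le_succ f hle
  have := dist_le p.reverse
  rw [Walk.length_reverse] at this
  omega

lemma Iso.dist_le (e : G ≃g G') (u v : V) : G'.dist (e u) (e v) ≤ G.dist u v := by
  by_cases h : G.Reachable u v
  · obtain ⟨p, hp⟩ := h.exists_walk_length_eq_dist
    calc G'.dist (e u) (e v) ≤ (p.map e.toHom).length := SimpleGraph.dist_le _
      _ = G.dist u v := by rw [Walk.length_map, hp]
  · rw [dist_eq_zero_of_not_reachable h,
      dist_eq_zero_of_not_reachable (Iso.reachable_iff.not.mpr h)]

lemma Iso.dist_eq (e : G ≃g G') (u v : V) : G'.dist (e u) (e v) = G.dist u v :=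
  (e.dist_le u v).antisymm (by simpa using e.symm.dist_le (e u) (e v))

lemma Iso.wiener_eq [Fintype V] [Fintype W] (e : G ≃g G') : wiener G = wiener G' := by
  unfold wiener
  congr 1
  rw [← e.toEquiv.sum_comp]
  refine Finset.sum_congr rfl fun u _ => ?_
  rw [← e.toEquiv.sum_comp]
  exact Finset.sum_congr rfl fun v _ => (e.dist_eq u v).symm

lemma pathGraph_dist {n : ℕ} (u v : Fin n) : (pathGraph n).dist u v = Nat.dist u v := by
  refine dist_eq_of_adj_le_succ_of_exists_adj_succ_eq (fun w : Fin n => Nat.dist u w)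
    (Nat.dist_self _) (fun x y h => ?_) (fun x hx => ?_) v
  · rw [pathGraph_adj] at h
    simp only [Nat.dist]; omega
  · have : x.val ≠ u.val := Fin.val_ne_of_ne hx
    rcases lt_or_gt_of_ne this with h | h
    · exact ⟨⟨x + 1, by omega⟩, pathGraph_adj.mpr (by simp), by simp only [Nat.dist]; omega⟩
    · exact ⟨⟨x - 1, by omega⟩, pathGraph_adj.mpr (by simp; omega), by simp only [Nat.dist]; omega⟩

lemma cycleGraph_dist {n : ℕ} (u v : Fin (n + 1)) :
    (cycleGraph (n + 1)).dist u v = min (v - u).val (u - v).val := by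
  refine dist_eq_of_adj_le_succ_of_exists_adj_succ_eq
    (fun w : Fin (n + 1) => min (w - u).val (u - w).val) (by simp) (fun x y h => ?_)
    (fun x hx => ?_) v
  · rw [cycleGraph_adj'] at h
    have := Fin.val_sub_add_val_eq_or x u; have := Fin.val_sub_add_val_eq_or u x
    have := Fin.val_sub_add_val_eq_or y u; have := Fin.val_sub_add_val_eq_or u y
    have := Fin.val_sub_add_val_eq_or x y; have := Fin.val_sub_add_val_eq_or y x
    have := x.isLt; have := y.isLt; have := u.isLt
    omega
  · obtain _ | m := n
    · exact absurd (Fin.ext (by omega)) hx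
    have hxu : x.val ≠ u.val := Fin.val_ne_of_ne hx
    have := Fin.val_sub_add_val_eq_or x u; have := Fin.val_sub_add_val_eq_or u x
    have := x.isLt; have := u.isLt
    rcases le_or_gt (x - u).val (u - x).val with h | h
    · refine ⟨x - 1, cycleGraph_adj'.mpr (Or.inl (by simp)), ?_⟩
      have := Fin.val_sub_add_val_eq_or x 1
      have := Fin.val_sub_add_val_eq_or (x - 1) u; have := Fin.val_sub_add_val_eq_or u (x - 1)
      have := (x - 1 - u).isLt; have := (u - (x - 1)).isLt
      simp only [Fin.val_one] at *
      omega
    · refine ⟨x + 1, cycleGraph_adj'.mpr (Or.inr (by simp)), ?_⟩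
      have := Fin.val_add_eq_or x 1
      have := Fin.val_sub_add_val_eq_or (x + 1) u; have := Fin.val_sub_add_val_eq_or u (x + 1)
      have := (x + 1 - u).isLt; have := (u - (x + 1)).isLt
      simp only [Fin.val_one] at *
      omega

/-- Cutting the cycle at `v` and reading it from the successor of `v` onwards lays out
`C_{n+1} - v` as the path `P_n`. -/
def deleteVertexCycleGraphIsoPathGraph (n : ℕ) (v : Fin (n + 1)) :
    deleteVertex (cycleGraph (n + 1)) v ≃g pathGraph n where
  toFun u := (u.1 - v).pred (sub_ne_zero.mpr u.2)
  invFun i := ⟨v + i.succ, by simp [Fin.succ_ne_zero]⟩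
  left_inv u := by ext; simp
  right_inv i := by simp
  map_rel_iff' {a b} := by
    have ha : a.1 - v ≠ 0 := sub_ne_zero.mpr a.2
    have hb : b.1 - v ≠ 0 := sub_ne_zero.mpr b.2
    have hab : a.1 - b.1 = (a.1 - v) - (b.1 - v) := by abel
    have hba : b.1 - a.1 = (b.1 - v) - (a.1 - v) := by abel
    simp only [Equiv.coe_fn_mk, pathGraph_adj, Fin.val_pred, deleteVertex, comap_adj,
      Function.Embedding.coe_subtype, cycleGraph_adj', hab, hba]
    generalize a.1 - v = p at ha ⊢
    generalize b.1 - v = q at hb ⊢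
    have := Fin.val_sub_add_val_eq_or p q; have := Fin.val_sub_add_val_eq_or q p
    have := Fin.pos_of_ne_zero ha; have := Fin.pos_of_ne_zero hb
    omega

end SimpleGraph

lemma wiener_pathGraph_ten : wiener (pathGraph 10) = 165 := by
  simp only [wiener, pathGraph_dist]
  decide

lemma wiener_cycleGraph_eleven : wiener (cycleGraph 11) = 165 := by
  simp only [wiener, cycleGraph_dist]
  decide

/-- Every vertex of the cycle `C₁₁` is a Šoltés vertex:
`W(C₁₁) = 165` and for every vertex `v`, `C₁₁ − v` is connected with
`W(C₁₁ − v) = W(C₁₁)`. -/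
theorem cycleGraph_eleven_all_vertices_soltes :
    wiener (cycleGraph 11) = 165 ∧
    ∀ v : Fin 11,
      (deleteVertex (cycleGraph 11) v).Connected ∧
      wiener (deleteVertex (cycleGraph 11) v) = wiener (cycleGraph 11) := by
  refine ⟨wiener_cycleGraph_eleven, fun v => ⟨?_, ?_⟩⟩
  · exact (deleteVertexCycleGraphIsoPathGraph 10 v).connected_iff.mpr (pathGraph_connected 9)
  · rw [(deleteVertexCycleGraphIsoPathGraph 10 v).wiener_eq, wiener_pathGraph_ten,
      wiener_cycleGraph_eleven]
end

section
/- Let Wh_8 be the wheel graph on 8 vertices (a 7-cycle together with a central hub vertex adjacent to all cycle vertices) and let v_0 be its hub. Then Wh_8 − v_0 = C_7 is connected and W(Wh_8 − v_0) = W(Wh_8) = 42; that is, the hub of Wh_8 is a Šoltés vertex. -/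
open SimpleGraph Finset

/-- The wheel graph with `n` rim vertices (so `n + 1` vertices in total): a cycle on
the rim `some i`, `i : ZMod n`, together with a hub `none` adjacent to every rim
vertex. -/
def wheelGraph (n : ℕ) : SimpleGraph (Option (ZMod n)) :=
  SimpleGraph.fromRel (fun x y =>
    (x = none ∧ y ≠ none) ∨ ∃ i : ZMod n, x = some i ∧ y = some (i + 1))


instance : DecidableRel (wheelGraph 7).Adj := fun a b =>
  decidable_of_iff' _ (SimpleGraph.fromRel_adj _ a b)

-- general dist lemmas
variable {V : Type*} {G : SimpleGraph V} {u v : V}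

lemma dist2 (h0 : u ≠ v) (h1 : ¬ G.Adj u v) (h2 : ∃ w, G.Adj u w ∧ G.Adj w v) :
    G.dist u v = 2 := by
  obtain ⟨w, ha, hb⟩ := h2
  have hle : G.dist u v ≤ 2 := dist_le (Walk.cons ha (Walk.cons hb Walk.nil))
  have hr : G.Reachable u v := ⟨Walk.cons ha (Walk.cons hb Walk.nil)⟩
  have h0' : G.dist u v ≠ 0 := by
    intro h
    rcases dist_eq_zero_iff_eq_or_not_reachable.mp h with h | h
    · exact h0 h
    · exact h hr
  have h1' : G.dist u v ≠ 1 := fun h => h1 (dist_eq_one_iff_adj.mp h)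
  omega

lemma dist3 (h0 : u ≠ v) (h1 : ¬ G.Adj u v) (h2 : ∀ w, ¬(G.Adj u w ∧ G.Adj w v))
    (h3 : ∃ a b, G.Adj u a ∧ G.Adj a b ∧ G.Adj b v) : G.dist u v = 3 := by
  obtain ⟨a, b, ha, hab, hb⟩ := h3
  have hle : G.dist u v ≤ 3 := dist_le (Walk.cons ha (Walk.cons hab (Walk.cons hb Walk.nil)))
  have hr : G.Reachable u v := ⟨Walk.cons ha (Walk.cons hab (Walk.cons hb Walk.nil))⟩
  have h0' : G.dist u v ≠ 0 := by
    intro h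
    rcases dist_eq_zero_iff_eq_or_not_reachable.mp h with h | h
    · exact h0 h
    · exact h hr
  have h1' : G.dist u v ≠ 1 := fun h => h1 (dist_eq_one_iff_adj.mp h)
  have h2' : G.dist u v ≠ 2 := by
    intro h
    obtain ⟨p, hp⟩ := exists_walk_of_dist_ne_zero h0'
    rw [h] at hp
    cases p with
    | nil => simp at hp
    | cons hxw q =>
      cases q with
      | nil => simp at hp
      | cons hwz r =>
        cases r with
        | nil => exact h2 _ ⟨hxw, hwz⟩
        | cons h4 r' => simp [Walk.length_cons] at hp
  omega

lemma iso_dist_le {V' : Type*} {G' : SimpleGraph V'} (f : G ≃g G') (x y : V) :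
    G'.dist (f x) (f y) ≤ G.dist x y := by
    by_cases h : G.dist x y = 0
    · rw [h]
      rcases dist_eq_zero_iff_eq_or_not_reachable.mp h with h' | h'
      · subst h'; simp
      · have hnr : ¬ G'.Reachable (f x) (f y) := by
          intro hr
          apply h'
          have := hr.map f.symm.toHom
          simpa using this
        simp [dist_eq_zero_of_not_reachable hnr]
    · obtain ⟨p, hp⟩ := exists_walk_of_dist_ne_zero h
      calc G'.dist (f x) (f y) ≤ (p.map f.toHom).length := dist_le _
        _ = p.length := Walk.length_map _ _
        _ = G.dist x y := hp

lemma iso_dist {V' : Type*} {G' : SimpleGraph V'} (e : G ≃g G') (u v : V) :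
    G'.dist (e u) (e v) = G.dist u v := by
  refine le_antisymm (iso_dist_le e u v) ?_
  have := iso_dist_le e.symm (e u) (e v)
  simpa using this

lemma wiener_iso {V V' : Type*} [Fintype V] [Fintype V'] {G : SimpleGraph V}
    {G' : SimpleGraph V'} (e : G ≃g G') : wiener G = wiener G' := by
  unfold wiener
  congr 1
  calc (∑ u, ∑ v, G.dist u v) = ∑ u, ∑ v, G'.dist (e u) (e v) := by
        simp only [iso_dist e]
    _ = ∑ u, ∑ v, G'.dist u v := by
        refine Fintype.sum_equiv e.toEquiv _ _ fun u => ?_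
        exact Fintype.sum_equiv e.toEquiv _ _ fun v => rfl

def fW : Option (ZMod 7) → Option (ZMod 7) → ℕ
  | none, none => 0
  | none, some _ => 1
  | some _, none => 1
  | some i, some j => if i = j then 0 else if j = i + 1 ∨ i = j + 1 then 1 else 2

lemma wheel_adj_hub (j : ZMod 7) : (wheelGraph 7).Adj none (some j) := by
  simp [wheelGraph, SimpleGraph.fromRel_adj]

lemma wheel_adj_some {i j : ZMod 7} :
    (wheelGraph 7).Adj (some i) (some j) ↔ i ≠ j ∧ (j = i + 1 ∨ i = j + 1) := by
  simp [wheelGraph, SimpleGraph.fromRel_adj]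

lemma wheel_dist (u v : Option (ZMod 7)) : (wheelGraph 7).dist u v = fW u v := by
  match u, v with
  | none, none => simp [fW]
  | none, some j => rw [dist_eq_one_iff_adj.mpr (wheel_adj_hub j)]; rfl
  | some i, none => rw [dist_eq_one_iff_adj.mpr (wheel_adj_hub i).symm]; rfl
  | some i, some j =>
    by_cases hij : i = j
    · subst hij; simp [fW]
    · by_cases hadj : j = i + 1 ∨ i = j + 1
      · rw [dist_eq_one_iff_adj.mpr (wheel_adj_some.mpr ⟨hij, hadj⟩)]
        simp [fW, hij, hadj]
      · rw [dist2 (by simpa using hij) (fun h => hadj (wheel_adj_some.mp h).2)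
            ⟨none, (wheel_adj_hub i).symm, wheel_adj_hub j⟩]
        simp [fW, hij, hadj]

lemma wiener_wheel : wiener (wheelGraph 7) = 42 := by
  simp only [wiener, wheel_dist]
  decide

def fC : Fin 7 → Fin 7 → ℕ := fun u v => min (u - v).val (v - u).val

lemma cycle_dist (u v : Fin 7) : (cycleGraph 7).dist u v = fC u v := by
  fin_cases u <;> fin_cases v <;>
    first
      | (rw [SimpleGraph.dist_self]; rfl)
      | (rw [dist_eq_one_iff_adj.mpr (by decide)]; rfl)
      | (rw [dist2 (by decide) (by decide) (by decide)]; rfl)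
      | (rw [dist3 (by decide) (by decide) (by decide) (by decide)]; rfl)

lemma wiener_cycle : wiener (cycleGraph 7) = 42 := by
  simp only [wiener, cycle_dist]
  decide

def rimEquiv : {u : Option (ZMod 7) // u ≠ none} ≃ Fin 7 where
  toFun u := (u.val.getD 0 : ZMod 7)
  invFun i := ⟨some (show ZMod 7 from i), Option.some_ne_none _⟩
  left_inv := by rintro ⟨(_ | i), hu⟩
                 · exact absurd rfl hu
                 · rfl
  right_inv := fun i => rfl

def rimIso : deleteVertex (wheelGraph 7) none ≃g cycleGraph 7 := by
  refine ⟨rimEquiv, ?_⟩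
  rintro ⟨(_ | i), hu⟩ ⟨(_ | j), hv⟩
  · exact absurd rfl hu
  · exact absurd rfl hu
  · exact absurd rfl hv
  · show (cycleGraph 7).Adj i j ↔ (wheelGraph 7).Adj (some i) (some j)
    clear hu hv
    revert i j
    show ∀ i j : Fin 7, (cycleGraph 7).Adj i j ↔
      (wheelGraph 7).Adj (some (show ZMod 7 from i)) (some (show ZMod 7 from j))
    intro i j
    rw [cycleGraph_adj, wheel_adj_some]
    revert i j
    decide

/-- For the wheel `Wh₈` on 8 vertices (a 7-cycle plus a hub `v₀`):
`Wh₈ − v₀` is (isomorphic to) `C₇`, it is connected, and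
`W(Wh₈ − v₀) = W(Wh₈) = 42`; i.e. the hub is a Šoltés vertex. -/
theorem wheel_eight_hub_soltes :
    Nonempty (deleteVertex (wheelGraph 7) none ≃g cycleGraph 7) ∧
    (deleteVertex (wheelGraph 7) none).Connected ∧
    wiener (deleteVertex (wheelGraph 7) none) = wiener (wheelGraph 7) ∧
    wiener (wheelGraph 7) = 42 := by
  refine ⟨⟨rimIso⟩, (Iso.connected_iff rimIso).mpr cycleGraph_connected, ?_, wiener_wheel⟩
  rw [wiener_iso rimIso, wiener_cycle, wiener_wheel]
end
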